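/- arXiv:1304.4567 — 3 statements merged into one kernel-verified Lean document; each statement's English description precedes it below -/
import Mathlib

section
/- For almost every real n×m matrix A (in the Lebesgue sense) and for any δ>0, there are at most finitely many integer vectors q ∈ ℤ^m such that ‖Aq − p‖_∞ < ‖q‖_∞^(−m/n−δ) for some p ∈ ℤ^n. -/
/-!
Fix `q ≠ 0` and a coordinate `j₀` with `|q j₀| = ‖q‖`. The linear map replacing `a j₀` by
`∑ j, a j * q j` has determinant `q j₀`, and it sends the rows `a` with `‖a‖ ≤ R` and
`∑ j, a j * q j` within `ψ` of an integer into a box whose `j₀`-th side is the `ψ`-neighbourhood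
of the integers in `[-m R ‖q‖, m R ‖q‖]`, of length `O(‖q‖ ψ)`. So these rows have volume
`O_R(ψ)`, and the matrices of norm at most `R` approximating `q` to within `ψ q` have volume
`O_R((ψ q) ^ n)`. Borel–Cantelli then gives finiteness for almost every matrix whenever
`∑ q, (ψ q) ^ n < ∞`; for `ψ q = ‖q‖ ^ (-m/n - δ)` this is the series `∑ q, ‖q‖ ^ (-m - n δ)`
over the lattice `ℤ^m`, which converges.
-/

open MeasureTheory Set

theorem Matrix.det_one_updateRow {ι R : Type*} [Fintype ι] [DecidableEq ι] [CommRing R]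
    (j : ι) (c : ι → R) : ((1 : Matrix ι ι R).updateRow j c).det = c j := by
  have hc : ∑ k, c k • (1 : Matrix ι ι R) k = c := by
    ext i
    simp [Matrix.one_apply]
  simpa [hc] using Matrix.det_updateRow_sum (1 : Matrix ι ι R) j c

theorem abs_sum_mul_le {ι : Type*} [Fintype ι] {a c : ι → ℝ} {R Q : ℝ} (ha : ∀ i, |a i| ≤ R)
    (hc : ∀ i, |c i| ≤ Q) : |∑ i, a i * c i| ≤ Fintype.card ι * R * Q := by
  calc |∑ i, a i * c i| ≤ ∑ i, |a i| * |c i| :=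
        (Finset.abs_sum_le_sum_abs _ _).trans_eq (by simp only [abs_mul])
    _ ≤ ∑ _i : ι, R * Q := Finset.sum_le_sum fun i _ =>
        mul_le_mul (ha i) (hc i) (abs_nonneg _) ((abs_nonneg _).trans (ha i))
    _ = Fintype.card ι * R * Q := by simp [mul_assoc]

theorem volume_pi_update_Icc {ι : Type*} [Fintype ι] [DecidableEq ι] (R : ℝ) (j₀ : ι)
    (s : Set ℝ) :
    volume (univ.pi (Function.update (fun _ => Icc (-R) R) j₀ s)) =
      volume s * ENNReal.ofReal (2 * R) ^ (Fintype.card ι - 1) := by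
  rw [volume_pi_pi, ← Finset.mul_prod_erase _ _ (Finset.mem_univ j₀), Function.update_self]
  congr 1
  rw [Finset.prod_congr rfl fun j hj => by
      rw [Function.update_of_ne (Finset.ne_of_mem_erase hj), Real.volume_Icc, sub_neg_eq_add,
        ← two_mul],
    Finset.prod_const, Finset.card_erase_of_mem (Finset.mem_univ _), Finset.card_univ]

theorem volume_abs_le_and_near_int_le {B ψ : ℝ} (hB : 0 ≤ B) (hψ₀ : 0 ≤ ψ) (hψ₁ : ψ ≤ 1) :
    volume {x : ℝ | |x| ≤ B ∧ ∃ p : ℤ, |x - p| < ψ} ≤ ENNReal.ofReal ((2 * B + 3) * (2 * ψ)) := by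
  set N : ℤ := ⌊B⌋ + 1
  have hN : 0 ≤ N := by positivity
  calc volume {x : ℝ | |x| ≤ B ∧ ∃ p : ℤ, |x - p| < ψ}
      ≤ volume (⋃ p ∈ Finset.Icc (-N) N, Ioo ((p : ℝ) - ψ) (p + ψ)) := by
        refine measure_mono fun x ⟨hx, p, hp⟩ => mem_iUnion₂.2 ⟨p, ?_, ?_⟩
        · have : |(p : ℝ)| < B + 1 := by
            calc |(p : ℝ)| ≤ |x| + |x - p| := by simpa using abs_sub x (x - p)
              _ < B + 1 := by linarith
          have : |p| - 1 ≤ ⌊B⌋ := Int.le_floor.2 (by push_cast; linarith)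
          exact Finset.mem_Icc.2 (abs_le.1 (by omega))
        · rw [abs_lt] at hp
          constructor <;> linarith
    _ ≤ ∑ p ∈ Finset.Icc (-N) N, volume (Ioo ((p : ℝ) - ψ) (p + ψ)) :=
        measure_biUnion_finset_le _ _
    _ = ENNReal.ofReal ((2 * N + 1) * (2 * ψ)) := by
        have hcard : ((N + 1 - -N).toNat : ℝ) = 2 * N + 1 := by
          rw [← Int.cast_natCast, Int.toNat_of_nonneg (by omega)]
          push_cast; ring
        simp only [Real.volume_Ioo, add_sub_sub_cancel, Finset.sum_const, Int.card_Icc,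
          nsmul_eq_mul]
        rw [ENNReal.ofReal_mul (by positivity), ← ENNReal.ofReal_natCast, hcard, ← two_mul]
    _ ≤ ENNReal.ofReal ((2 * B + 3) * (2 * ψ)) := by
        have : (N : ℝ) ≤ B + 1 := by push_cast [N]; linarith [Int.floor_le B]
        gcongr ENNReal.ofReal (?_ * _)
        linarith

theorem mapsTo_toLin'_one_updateRow {ι : Type*} [Fintype ι] [DecidableEq ι] {R Q ψ : ℝ}
    {c : ι → ℝ} (hc : ∀ j, |c j| ≤ Q) (j₀ : ι) :
    MapsTo (Matrix.toLin' ((1 : Matrix ι ι ℝ).updateRow j₀ c))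
      {a : ι → ℝ | ‖a‖ ≤ R ∧ ∃ p : ℤ, |∑ j, a j * c j - p| < ψ}
      (univ.pi (Function.update (fun _ => Icc (-R) R) j₀
        {x | |x| ≤ Fintype.card ι * R * Q ∧ ∃ p : ℤ, |x - p| < ψ})) := by
  rintro a ⟨ha, p, hp⟩ j -
  have hcoord (j : ι) : |a j| ≤ R := (norm_le_pi_norm a j).trans ha
  rcases eq_or_ne j j₀ with rfl | hj
  · have hLa : Matrix.toLin' ((1 : Matrix ι ι ℝ).updateRow j c) a j = ∑ k, a k * c k := by
      simp [Matrix.mulVec, dotProduct, mul_comm]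
    simpa [hLa] using ⟨abs_sum_mul_le hcoord hc, p, hp⟩
  · have hLa : Matrix.toLin' ((1 : Matrix ι ι ℝ).updateRow j₀ c) a j = a j := by
      simp [Matrix.mulVec, dotProduct, Matrix.updateRow_ne hj, Matrix.one_apply]
    simpa [hj, hLa, abs_le] using hcoord j

theorem volume_norm_le_and_near_int_le {ι : Type*} [Fintype ι] {R ψ : ℝ} (hR : 0 ≤ R)
    (hψ₀ : 0 ≤ ψ) (hψ₁ : ψ ≤ 1) {q : ι → ℤ} (hq : q ≠ 0) :
    volume {a : ι → ℝ | ‖a‖ ≤ R ∧ ∃ p : ℤ, |∑ j, a j * (q j : ℝ) - p| < ψ} ≤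
      ENNReal.ofReal ((2 * Fintype.card ι * R + 3) * (2 * R) ^ (Fintype.card ι - 1) * (2 * ψ)) := by
  classical
  set m := Fintype.card ι
  obtain ⟨k, hk⟩ := Function.ne_iff.1 hq
  have : Nonempty ι := ⟨k⟩
  obtain ⟨j₀, hj₀⟩ := Finite.exists_max fun j => |q j|
  set Q : ℝ := |(q j₀ : ℝ)|
  have hqQ (j : ι) : |(q j : ℝ)| ≤ Q := by
    simp only [Q, ← Int.cast_abs]
    exact_mod_cast hj₀ j
  have hQ : 1 ≤ Q := (by exact_mod_cast Int.one_le_abs hk : (1 : ℝ) ≤ |(q k : ℝ)|).trans (hqQ k)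
  have hQ₀ : 0 < Q := by linarith
  set L := Matrix.toLin' ((1 : Matrix ι ι ℝ).updateRow j₀ fun j => (q j : ℝ))
  have hdet : LinearMap.det L = q j₀ := by
    rw [LinearMap.det_toLin', Matrix.det_one_updateRow]
  have hQinv : Q⁻¹ * (2 * (m * R * Q) + 3) ≤ 2 * m * R + 3 := by
    calc Q⁻¹ * (2 * (m * R * Q) + 3) = 2 * m * R + 3 * Q⁻¹ := by field_simp
      _ ≤ 2 * m * R + 3 := by linarith [inv_le_one_of_one_le₀ hQ]
  calc volume {a : ι → ℝ | ‖a‖ ≤ R ∧ ∃ p : ℤ, |∑ j, a j * (q j : ℝ) - p| < ψ}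
      ≤ volume (L ⁻¹' univ.pi (Function.update (fun _ => Icc (-R) R) j₀
          {x | |x| ≤ m * R * Q ∧ ∃ p : ℤ, |x - p| < ψ})) :=
        measure_mono (mapsTo_toLin'_one_updateRow hqQ j₀)
    _ = ENNReal.ofReal Q⁻¹ * (volume {x : ℝ | |x| ≤ m * R * Q ∧ ∃ p : ℤ, |x - p| < ψ} *
          ENNReal.ofReal (2 * R) ^ (m - 1)) := by
        rw [Measure.addHaar_preimage_linearMap _ (hdet ▸ abs_pos.1 hQ₀), hdet, abs_inv,
          volume_pi_update_Icc]
    _ ≤ ENNReal.ofReal Q⁻¹ * (ENNReal.ofReal ((2 * (m * R * Q) + 3) * (2 * ψ)) *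
          ENNReal.ofReal (2 * R) ^ (m - 1)) := by
        gcongr
        exact volume_abs_le_and_near_int_le (by positivity) hψ₀ hψ₁
    _ = ENNReal.ofReal (Q⁻¹ * (2 * (m * R * Q) + 3) * ((2 * R) ^ (m - 1) * (2 * ψ))) := by
        rw [← ENNReal.ofReal_pow (by positivity), ← ENNReal.ofReal_mul (by positivity),
          ← ENNReal.ofReal_mul (by positivity)]
        ring_nf
    _ ≤ ENNReal.ofReal ((2 * m * R + 3) * (2 * R) ^ (m - 1) * (2 * ψ)) := by
        rw [mul_assoc _ ((2 * R) ^ (m - 1))]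
        gcongr

theorem volume_matrix_norm_le_and_near_int_le {κ ι : Type*} [Fintype κ] [Fintype ι] {R ψ : ℝ}
    (hR : 0 ≤ R) (hψ₀ : 0 ≤ ψ) (hψ₁ : ψ ≤ 1) {q : ι → ℤ} (hq : q ≠ 0) :
    volume {A : κ → ι → ℝ | ‖A‖ ≤ R ∧ ∀ i, ∃ p : ℤ, |∑ j, A i j * (q j : ℝ) - p| < ψ} ≤
      ENNReal.ofReal ((2 * Fintype.card ι * R + 3) * (2 * R) ^ (Fintype.card ι - 1) * (2 * ψ)) ^
        Fintype.card κ := by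
  have hpi : {A : κ → ι → ℝ | ‖A‖ ≤ R ∧ ∀ i, ∃ p : ℤ, |∑ j, A i j * (q j : ℝ) - p| < ψ} =
      univ.pi fun _ => {a : ι → ℝ | ‖a‖ ≤ R ∧ ∃ p : ℤ, |∑ j, a j * (q j : ℝ) - p| < ψ} := by
    ext A
    simp [pi_norm_le_iff_of_nonneg hR, forall_and]
  rw [hpi, volume_pi_pi]
  exact (Finset.prod_le_pow_card _ _ _ fun i _ =>
    volume_norm_le_and_near_int_le hR hψ₀ hψ₁ hq).trans_eq (by simp)

theorem ae_finite_setOf_approx_of_summable {κ ι : Type*} [Fintype κ] [Fintype ι]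
    (ψ : (ι → ℤ) → ℝ) (hψ₀ : ∀ q, 0 ≤ ψ q) (hψ₁ : ∀ q, ψ q ≤ 1)
    (hψ : Summable fun q => ψ q ^ Fintype.card κ) :
    ∀ᵐ A : κ → ι → ℝ ∂volume,
      {q : ι → ℤ | ∃ p : κ → ℤ,
        ‖(fun i => (∑ j, A i j * (q j : ℝ)) - (p i : ℝ))‖ < ψ q}.Finite := by
  set n := Fintype.card κ
  set E : ℕ → (ι → ℤ) → Set (κ → ι → ℝ) := fun R q =>
    {A | q ≠ 0 ∧ ‖A‖ ≤ R ∧ ∀ i, ∃ p : ℤ, |∑ j, A i j * (q j : ℝ) - p| < ψ q}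
  have hE (R : ℕ) : ∑' q, volume (E R q) ≠ ⊤ := by
    set C : ℝ := (2 * Fintype.card ι * R + 3) * (2 * R) ^ (Fintype.card ι - 1) * 2
    have hle (q : ι → ℤ) : volume (E R q) ≤ ENNReal.ofReal (C ^ n * ψ q ^ n) := by
      rcases eq_or_ne q 0 with rfl | hq
      · simp [E]
      · calc volume (E R q)
            ≤ volume {A : κ → ι → ℝ |
                ‖A‖ ≤ R ∧ ∀ i, ∃ p : ℤ, |∑ j, A i j * (q j : ℝ) - p| < ψ q} :=
              measure_mono fun A hA => hA.2
          _ ≤ ENNReal.ofReal (C * ψ q) ^ n := by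
              simpa only [C, mul_assoc] using
                volume_matrix_norm_le_and_near_int_le R.cast_nonneg (hψ₀ q) (hψ₁ q) hq
          _ = ENNReal.ofReal (C ^ n * ψ q ^ n) := by
              rw [← mul_pow, ENNReal.ofReal_pow (by positivity [hψ₀ q])]
    refine ne_top_of_le_ne_top ?_ (ENNReal.tsum_le_tsum hle)
    rw [← ENNReal.ofReal_tsum_of_nonneg (fun q => by positivity [hψ₀ q]) (hψ.mul_left _)]
    exact ENNReal.ofReal_ne_top
  filter_upwards [ae_all_iff.2 fun R => ae_finite_setOfPred_mem (hE R)] with A hA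
  refine ((hA ⌈‖A‖⌉₊).insert 0).subset fun q ⟨p, hp⟩ => ?_
  rcases eq_or_ne q 0 with rfl | hq
  · exact mem_insert _ _
  refine mem_insert_of_mem _ ⟨hq, Nat.le_ceil _, fun i => ⟨p i, ?_⟩⟩
  exact (norm_le_pi_norm _ i).trans_lt hp

theorem pi_norm_intCast {ι : Type*} [Fintype ι] (q : ι → ℤ) :
    ‖fun j => (q j : ℝ)‖ = ‖q‖ := by
  simp only [Pi.norm_def]
  rfl

theorem summable_pi_int_norm_rpow {ι : Type*} [Fintype ι] {r : ℝ} (hr : r < -Fintype.card ι) :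
    Summable fun q : ι → ℤ => ‖q‖ ^ r := by
  let L := Submodule.span ℤ (Set.range (Pi.basisFun ℝ ι))
  have : DiscreteTopology L := ZSpan.discreteTopology_pi_basisFun
  have hL := ZLattice.summable_norm_rpow L r
    (by rwa [ZLattice.rank ℝ L, Module.finrank_fintype_fun_eq_card])
  have hmem (q : ι → ℤ) : (fun j => (q j : ℝ)) ∈ L := by
    simp [L, Module.Basis.mem_span_iff_repr_mem]
  refine (hL.comp_injective (i := fun q => ⟨fun j => (q j : ℝ), hmem q⟩) fun q q' h => ?_).congr
    fun q => by simp only [Function.comp_apply, Submodule.coe_norm, pi_norm_intCast]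
  exact funext fun j => Int.cast_injective (congrFun (congrArg Subtype.val h) j)

theorem one_le_pi_int_norm {ι : Type*} [Fintype ι] {q : ι → ℤ} (hq : q ≠ 0) : 1 ≤ ‖q‖ := by
  obtain ⟨j, hj⟩ := Function.ne_iff.1 hq
  have : (1 : ℝ) ≤ ‖q j‖ := by
    rw [Int.norm_eq_abs]
    exact_mod_cast Int.one_le_abs hj
  exact this.trans (norm_le_pi_norm q j)

theorem pi_int_norm_rpow_le_rpow {ι : Type*} [Fintype ι] (q : ι → ℤ) {a b : ℝ} (ha : a ≠ 0)
    (hab : a ≤ b) : ‖q‖ ^ a ≤ ‖q‖ ^ b := by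
  rcases eq_or_ne q 0 with rfl | hq
  · rw [norm_zero, Real.zero_rpow ha]
    positivity
  · exact Real.rpow_le_rpow_of_exponent_le (one_le_pi_int_norm hq) hab

theorem stmt0_general (n m : ℕ) (hn : 0 < n) :
    ∀ᵐ A : Fin n → Fin m → ℝ ∂volume, ∀ δ : ℝ, 0 < δ →
      {q : Fin m → ℤ | ∃ p : Fin n → ℤ,
        ‖(fun i => (∑ j, A i j * (q j : ℝ)) - (p i : ℝ))‖ <
          ‖q‖ ^ (-(m : ℝ) / n - δ)}.Finite := by
  have hexp (δ : ℝ) (hδ : 0 < δ) : -(m : ℝ) / n - δ < 0 := by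
    rw [neg_div]
    linarith [show 0 ≤ (m : ℝ) / n by positivity]
  have hfixed (δ : ℝ) (hδ : 0 < δ) := ae_finite_setOf_approx_of_summable (κ := Fin n)
    (fun q : Fin m → ℤ => ‖q‖ ^ (-(m : ℝ) / n - δ)) (fun q => by positivity)
    (fun q => (pi_int_norm_rpow_le_rpow q (hexp δ hδ).ne (hexp δ hδ).le).trans_eq (by simp)) (by
      refine (summable_pi_int_norm_rpow (r := -m - n * δ) (by
        simpa using mul_pos (Nat.cast_pos.2 hn : (0 : ℝ) < n) hδ)).congr fun q => ?_
      rw [Fintype.card_fin, ← Real.rpow_natCast, ← Real.rpow_mul (norm_nonneg q)]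
      field_simp)
  filter_upwards [ae_all_iff.2 fun k : ℕ => hfixed (1 / (k + 1)) (by positivity)] with A hA δ hδ
  obtain ⟨k, hk⟩ := exists_nat_one_div_lt hδ
  refine (hA k).subset fun q ⟨p, hp⟩ => ⟨p, hp.trans_le ?_⟩
  exact pi_int_norm_rpow_le_rpow q (hexp δ hδ).ne (by linarith)

/-- For almost every real `n × m` matrix `A` (Lebesgue), for any `δ > 0`, there are at
most finitely many `q ∈ ℤ^m` with `‖Aq - p‖_∞ < ‖q‖_∞ ^ (-m/n - δ)` for some `p ∈ ℤ^n`. -/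
theorem stmt0 (n m : ℕ) (hn : 0 < n) (hm : 0 < m) :
    ∀ᵐ A : Fin n → Fin m → ℝ ∂volume, ∀ δ : ℝ, 0 < δ →
      {q : Fin m → ℤ | ∃ p : Fin n → ℤ,
        ‖(fun i => (∑ j, A i j * (q j : ℝ)) - (p i : ℝ))‖ <
          ‖q‖ ^ (-(m : ℝ) / n - δ)}.Finite :=
  stmt0_general n m hn
end

section
/- Let M, N, K be positive integers with K ≥ (M+N)/gcd(M,N). Taking g = M/gcd(M,N), one has g ∈ {1,…,K}, min{K−g, ⌊gN/M⌋} = gN/M (which is an integer), and the bound gNK/min{K, ⌊g(N+M)/M⌋} evaluated at this g equals K·MN/(M+N). -/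
/-!
With `d = gcd M N` and `g = M / d`, both floors in the statement are exact: `g N / M = N / d` and
`g (N + M) / M = (M + N) / d ≤ K`. The bound then becomes `(M / d) N K / ((M + N) / d)`, in which
the common factor `d` cancels.
-/

namespace Nat

theorem div_mul_eq_mul_div_of_dvd {a b d : ℕ} (ha : d ∣ a) (hb : d ∣ b) :
    a / d * b = a * (b / d) := by
  rw [Nat.div_mul_right_comm ha, Nat.mul_div_assoc _ hb]

theorem div_mul_div_self_of_dvd {a b d : ℕ} (ha : d ∣ a) (hb : d ∣ b) (ha0 : 0 < a) :
    a / d * b / a = b / d := by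
  rw [div_mul_eq_mul_div_of_dvd ha hb, Nat.mul_div_cancel_left _ ha0]

end Nat

theorem stmt15_general (M N K : ℕ) (hM : 0 < M)
    (hKbig : (M + N) / Nat.gcd M N ≤ K) :
    1 ≤ M / Nat.gcd M N ∧ M / Nat.gcd M N ≤ K ∧
      M ∣ (M / Nat.gcd M N) * N ∧
      min (K - M / Nat.gcd M N) ((M / Nat.gcd M N) * N / M) =
        (M / Nat.gcd M N) * N / M ∧
      ((M / Nat.gcd M N : ℕ) : ℝ) * N * K /
          ((min K ((M / Nat.gcd M N) * (N + M) / M) : ℕ) : ℝ) =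
        (K : ℝ) * M * N / (M + N) := by
  have hdM := Nat.gcd_dvd_left M N
  have hdN := Nat.gcd_dvd_right M N
  have hbound : M / Nat.gcd M N + N / Nat.gcd M N ≤ K :=
    Nat.add_div_of_dvd_right hdM ▸ hKbig
  have hfloorN : M / Nat.gcd M N * N / M = N / Nat.gcd M N :=
    Nat.div_mul_div_self_of_dvd hdM hdN hM
  have hfloorNM : M / Nat.gcd M N * (N + M) / M = (M + N) / Nat.gcd M N := by
    rw [Nat.div_mul_div_self_of_dvd hdM (dvd_add hdN hdM) hM, add_comm]
  refine ⟨Nat.div_pos (Nat.gcd_le_left N hM) (Nat.gcd_pos_of_pos_left N hM),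
    (Nat.le_add_right _ _).trans hbound,
    ⟨N / Nat.gcd M N, Nat.div_mul_eq_mul_div_of_dvd hdM hdN⟩, by
      rw [hfloorN]
      exact min_eq_right (Nat.le_sub_of_add_le' hbound), ?_⟩
  rw [hfloorNM, min_eq_right hKbig, mul_assoc, mul_div_right_comm,
    Nat.cast_div_div_div_cancel_right (dvd_add hdM hdN) hdM]
  push_cast
  ring

/-- With `K ≥ (M+N)/gcd(M,N)` and `g = M/gcd(M,N)`: `g ∈ {1,…,K}`,
`min(K-g, ⌊gN/M⌋) = gN/M` exactly, and `gNK/min(K, ⌊g(N+M)/M⌋) = K·MN/(M+N)`. -/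
theorem stmt15 (M N K : ℕ) (hM : 0 < M) (hN : 0 < N) (hK : 0 < K)
    (hKbig : (M + N) / Nat.gcd M N ≤ K) :
    1 ≤ M / Nat.gcd M N ∧ M / Nat.gcd M N ≤ K ∧
      M ∣ (M / Nat.gcd M N) * N ∧
      min (K - M / Nat.gcd M N) ((M / Nat.gcd M N) * N / M) =
        (M / Nat.gcd M N) * N / M ∧
      ((M / Nat.gcd M N : ℕ) : ℝ) * N * K /
          ((min K ((M / Nat.gcd M N) * (N + M) / M) : ℕ) : ℝ) =
        (K : ℝ) * M * N / (M + N) :=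
  stmt15_general M N K hM hKbig
end

section
/- Let f₁,…,f_n : U → ℝ be analytic functions on a connected open set U ⊆ ℝ^d such that 1, f₁,…,f_n are linearly independent over ℝ. Then for almost every x ∈ U, the partial derivatives of f = (f₁,…,f_n) at x up to some finite order span ℝ^n (i.e., f is a nondegenerate map). -/
/-!
If the derivatives of positive order of `f` at a point `x ∈ U` did not span, a nonzero linear
functional `φ` would kill all of them. Then `φ ∘ f` is analytic with vanishing Taylor
coefficients of positive order at `x`, hence constant on the connected set `U`, which is a
nontrivial linear relation between `1, f₁, …, fₙ`. So the span condition holds at every point of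
`U`, and by finite-dimensionality already for derivatives of bounded order.
-/

open MeasureTheory Filter Topology

section Analytic

variable {𝕜 E F : Type*} [NontriviallyNormedField 𝕜] [NormedAddCommGroup E] [NormedSpace 𝕜 E]
  [NormedAddCommGroup F] [NormedSpace 𝕜 F]

theorem AnalyticOnNhd.eqOn_const_of_iteratedFDeriv_eq_zero [CharZero 𝕜] [CompleteSpace F]
    {g : E → F} {U : Set E} (hg : AnalyticOnNhd 𝕜 g U) (hU : IsPreconnected U) {x : E}
    (hx : x ∈ U) (h : ∀ k, 1 ≤ k → iteratedFDeriv 𝕜 k g x = 0) :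
    Set.EqOn g (fun _ => g x) U := by
  obtain ⟨p, r, hp⟩ := hg x hx
  have hlocal : g =ᶠ[𝓝 x] fun _ => g x := by
    filter_upwards [Metric.eball_mem_nhds x hp.r_pos] with z hz
    have hsum := hp.hasSum_iteratedFDeriv (y := z - x) (by simpa [edist_eq_enorm_sub] using hz)
    have hterms : (fun k : ℕ => ((k.factorial : 𝕜)⁻¹ • iteratedFDeriv 𝕜 k g x fun _ => z - x))
        = fun k => if k = 0 then g x else 0 := by
      funext k
      rcases Nat.eq_zero_or_pos k with rfl | hk
      · simp
      · simp [h k hk, hk.ne']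
    rw [hterms, add_sub_cancel] at hsum
    exact hsum.unique (hasSum_ite_eq 0 (g x))
  exact hg.eqOn_of_preconnected_of_eventuallyEq analyticOnNhd_const hU hx hlocal

theorem iteratedFDeriv_apply_pi {ι : Type*} [Fintype ι] {G : E → ι → F} {x : E} {k : ℕ}
    (hG : ContDiffAt 𝕜 k G x) (v : Fin k → E) (i : ι) :
    iteratedFDeriv 𝕜 k G x v i = iteratedFDeriv 𝕜 k (fun u => G u i) x v := by
  rw [show (fun u => G u i) = ContinuousLinearMap.proj (R := 𝕜) i ∘ G from rfl,
    (ContinuousLinearMap.proj i).iteratedFDeriv_comp_left hG le_rfl]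
  rfl

end Analytic

theorem LinearIndependent.dual_eq_zero_of_forall_apply_eq {K X ι : Type*} [Field K] [Fintype ι]
    {f : ι → X → K}
    (hli : LinearIndependent K fun o : Option ι => (Option.elim o (fun _ => 1) f : X → K))
    (φ : Module.Dual K (ι → K)) (c : K) (hφ : ∀ u, φ (fun i => f i u) = c) : φ = 0 := by
  classical
  have hφ_sum : ∀ y, φ y = ∑ i, φ (Pi.single i 1) * y i := fun y => by
    conv_lhs => rw [← (Pi.basisFun K ι).sum_repr y]
    simp [mul_comm]
  have hrel := Fintype.linearIndependent_iff.mp hli (Option.elim · (-c) fun i => φ (Pi.single i 1))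
    (by
      funext u
      simp only [Fintype.sum_option, Option.elim, Finset.sum_apply, Pi.smul_apply,
        smul_eq_mul, Pi.zero_apply, mul_one]
      rw [← hφ u, hφ_sum]
      ring)
  refine (Pi.basisFun K ι).ext fun i => ?_
  simpa using hrel (some i)

theorem Submodule.exists_eq_top_of_iSup_eq_top {R M ι : Type*} [Semiring R] [AddCommMonoid M]
    [Module R M] [Module.Finite R M] [Nonempty ι] {T : ι → Submodule R M}
    (hT : Directed (· ≤ ·) T) (h : ⨆ i, T i = ⊤) : ∃ i, T i = ⊤ := by
  obtain ⟨-, ⟨i, rfl⟩, hi⟩ := (CompleteLattice.isCompactElement_iff_le_of_directed_sSup_le _ _).mp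
    ((fg_iff_compact ⊤).mp Module.Finite.fg_top) (Set.range T) (Set.range_nonempty T)
    hT.directedOn_range h.ge
  exact ⟨i, top_le_iff.mp hi⟩

theorem span_iteratedFDeriv_eq_top {𝕜 E ι : Type*} [NontriviallyNormedField 𝕜] [CharZero 𝕜]
    [CompleteSpace 𝕜] [NormedAddCommGroup E] [NormedSpace 𝕜 E] [Fintype ι]
    {f : ι → E → 𝕜} {U : Set E} (hU : IsPreconnected U) (hf : ∀ i, AnalyticOnNhd 𝕜 (f i) U)
    (hli : LinearIndependent 𝕜 fun o : Option ι =>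
      (Option.elim o (fun _ => (1 : 𝕜)) f : E → 𝕜) ∘ (Subtype.val : U → E))
    {x : E} (hx : x ∈ U) :
    Submodule.span 𝕜 {y : ι → 𝕜 | ∃ k : ℕ, 1 ≤ k ∧ ∃ v : Fin k → E,
      y = fun i => iteratedFDeriv 𝕜 k (f i) x v} = ⊤ := by
  by_contra hne
  obtain ⟨φ, hφ0, hφ⟩ := Submodule.exists_dual_map_eq_bot_of_lt_top (lt_top_iff_ne_top.2 hne)
    inferInstance
  rw [Submodule.map_span, Submodule.span_eq_bot] at hφ
  set G : E → ι → 𝕜 := fun u i => f i u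
  set ψ : (ι → 𝕜) →L[𝕜] 𝕜 := LinearMap.toContinuousLinearMap φ
  have hG : AnalyticOnNhd 𝕜 G U := fun u hu => analyticAt_pi_iff.mpr fun i => hf i u hu
  have hderiv : ∀ k, 1 ≤ k → iteratedFDeriv 𝕜 k (ψ ∘ G) x = 0 := by
    intro k hk
    ext v
    have hGk : ContDiffAt 𝕜 k G x := (hG x hx).contDiffAt
    rw [ψ.iteratedFDeriv_comp_left hGk le_rfl]
    exact hφ _ ⟨_, ⟨k, hk, v, funext fun i => iteratedFDeriv_apply_pi hGk v i⟩, rfl⟩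
  have hconst := (ψ.comp_analyticOnNhd hG).eqOn_const_of_iteratedFDeriv_eq_zero hU hx hderiv
  have hli' : LinearIndependent 𝕜 fun o : Option ι =>
      (Option.elim o (fun _ => 1) fun i (u : U) => f i u) := by
    convert hli with o
    cases o <;> rfl
  exact hφ0 (hli'.dual_eq_zero_of_forall_apply_eq φ (φ (G x)) fun u => hconst u.2)

theorem exists_span_iteratedFDeriv_le_eq_top {𝕜 E ι : Type*} [NontriviallyNormedField 𝕜]
    [NormedAddCommGroup E] [NormedSpace 𝕜 E] [Fintype ι] {f : ι → E → 𝕜} {x : E}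
    (h : Submodule.span 𝕜 {y : ι → 𝕜 | ∃ k : ℕ, 1 ≤ k ∧ ∃ v : Fin k → E,
      y = fun i => iteratedFDeriv 𝕜 k (f i) x v} = ⊤) :
    ∃ l : ℕ, Submodule.span 𝕜 {y : ι → 𝕜 | ∃ k : ℕ, 1 ≤ k ∧ k ≤ l ∧ ∃ v : Fin k → E,
      y = fun i => iteratedFDeriv 𝕜 k (f i) x v} = ⊤ := by
  set D : ℕ → Set (ι → 𝕜) := fun l => {y | ∃ k : ℕ, 1 ≤ k ∧ k ≤ l ∧ ∃ v : Fin k → E,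
    y = fun i => iteratedFDeriv 𝕜 k (f i) x v}
  have hD : Monotone fun l => Submodule.span 𝕜 (D l) := by
    intro a b hab
    refine Submodule.span_mono ?_
    rintro _ ⟨k, hk, hka, v, rfl⟩
    exact ⟨k, hk, hka.trans hab, v, rfl⟩
  refine Submodule.exists_eq_top_of_iSup_eq_top hD.directed_le (eq_top_iff.mpr ?_)
  rw [← h, ← Submodule.span_iUnion]
  refine Submodule.span_mono ?_
  rintro _ ⟨k, hk, v, rfl⟩
  exact Set.mem_iUnion.mpr ⟨k, k, hk, le_rfl, v, rfl⟩

theorem stmt17_general (d n : ℕ)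
    (U : Set (Fin d → ℝ)) (hU : IsOpen U) (hUconn : IsConnected U)
    (f : Fin n → (Fin d → ℝ) → ℝ)
    (hf : ∀ i, AnalyticOnNhd ℝ (f i) U)
    (hli : LinearIndependent ℝ (fun i : Option (Fin n) =>
      (Option.elim i (fun _ => (1 : ℝ)) (fun j => f j) : (Fin d → ℝ) → ℝ) ∘
        (Subtype.val : U → (Fin d → ℝ)))) :
    ∀ᵐ x ∂(volume.restrict U), ∃ l : ℕ,
      Submodule.span ℝ {y : Fin n → ℝ | ∃ k : ℕ, 1 ≤ k ∧ k ≤ l ∧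
        ∃ v : Fin k → (Fin d → ℝ),
          y = fun i => iteratedFDeriv ℝ k (f i) x v} = ⊤ := by
  filter_upwards [ae_restrict_mem hU.measurableSet] with x hx
  exact exists_span_iteratedFDeriv_le_eq_top
    (span_iteratedFDeriv_eq_top hUconn.isPreconnected hf hli hx)

/-- If `f₁,…,f_n` are analytic on a connected open `U ⊆ ℝ^d` and `1, f₁,…,f_n` are
linearly independent over `ℝ` (as functions on `U`), then for almost every `x ∈ U`
the partial derivatives of `f = (f₁,…,f_n)` at `x` up to some finite order span `ℝ^n`. -/
theorem stmt17 (d n : ℕ) (hd : 0 < d) (hn : 0 < n)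
    (U : Set (Fin d → ℝ)) (hU : IsOpen U) (hUconn : IsConnected U)
    (f : Fin n → (Fin d → ℝ) → ℝ)
    (hf : ∀ i, AnalyticOnNhd ℝ (f i) U)
    (hli : LinearIndependent ℝ (fun i : Option (Fin n) =>
      (Option.elim i (fun _ => (1 : ℝ)) (fun j => f j) : (Fin d → ℝ) → ℝ) ∘
        (Subtype.val : U → (Fin d → ℝ)))) :
    ∀ᵐ x ∂(volume.restrict U), ∃ l : ℕ,
      Submodule.span ℝ {y : Fin n → ℝ | ∃ k : ℕ, 1 ≤ k ∧ k ≤ l ∧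
        ∃ v : Fin k → (Fin d → ℝ),
          y = fun i => iteratedFDeriv ℝ k (f i) x v} = ⊤ :=
  stmt17_general d n U hU hUconn f hf hli
end
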